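/- arXiv:1204.3293 — 2 statements merged into one kernel-verified Lean document; each statement's English description precedes it below -/
import Mathlib

section
/- If two uniquely decodable strings u and v over Σ have no characters in common, then their concatenation uv is uniquely decodable. -/
/-- The multiset of bigrams (length-2 contiguous substrings) of a list. -/
def bigrams {β : Type*} (l : List β) : Multiset (β × β) :=
  (l.zip l.tail : List (β × β))

/-- The delimited form `$w$` of a string `w` over `α`, with `none` as the delimiter. -/
def delim {α : Type*} (w : List α) : List (Option α) :=
  none :: (w.map some ++ [none])

/-- The bigram encoding of a string: the multiset of bigrams of its delimited form. -/
def Phi {α : Type*} (w : List α) : Multiset (Option α × Option α) :=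
  bigrams (delim w)

/-- A string is uniquely decodable if it is the only string with its bigram encoding. -/
def UD {α : Type*} (w : List α) : Prop :=
  ∀ w' : List α, Phi w' = Phi w → w' = w

/-!
Let `p c` mean `c ∈ v`. In `$uv$` no letter satisfying `p` is followed by one that does not,
the first letter fails `p` and the last one satisfies it. These are conditions on single bigrams
(`SplitAdj p`), so every `w` with `Φ w = Φ (uv)` splits as `w = ab` with `a`, `b` nonempty, the
letters of `a` failing `p` and those of `b` satisfying it. Replacing the letters of `b` by the
delimiter sends `Φ (ab)` to `Φ a` plus copies of `($, $)`, a bigram that never occurs in the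
encoding of a nonempty string; hence `Φ a = Φ u`, symmetrically `Φ b = Φ v`, and unique
decodability of `u` and `v` gives `w = uv`.
-/

section Bigrams

variable {β γ : Type*}

lemma bigrams_cons_cons (x y : β) (l : List β) :
    bigrams (x :: y :: l) = (x, y) ::ₘ bigrams (y :: l) := rfl

lemma bigrams_map (f : β → γ) (l : List β) :
    bigrams (l.map f) = (bigrams l).map (Prod.map f f) := by
  simp [bigrams, ← List.map_tail, List.zip_map]

lemma bigrams_append_cons (l₁ l₂ : List β) (x : β) :
    bigrams (l₁ ++ x :: l₂) = bigrams (l₁ ++ [x]) + bigrams (x :: l₂) := by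
  induction l₁ using List.twoStepInduction with
  | nil => simp [bigrams]
  | singleton y => simp [bigrams]
  | cons_cons y z l ih => simp_all [bigrams_cons_cons]

lemma bigrams_cons_replicate (x : β) (n : ℕ) :
    bigrams (x :: List.replicate n x) = Multiset.replicate n (x, x) := by
  induction n with
  | zero => rfl
  | succ n ih => rw [List.replicate_succ, bigrams_cons_cons, ih, Multiset.replicate_succ]

lemma isChain_iff_forall_mem_bigrams {R : β → β → Prop} {l : List β} :
    l.IsChain R ↔ ∀ q ∈ bigrams l, R q.1 q.2 := by
  induction l using List.twoStepInduction with
  | nil => simp [bigrams]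
  | singleton y => simp [bigrams]
  | cons_cons y z l _ ih => simp [bigrams_cons_cons, ih]

lemma isChain_of_bigrams_eq {R : β → β → Prop} {l l' : List β} (hl : bigrams l' = bigrams l)
    (h : l.IsChain R) : l'.IsChain R :=
  isChain_iff_forall_mem_bigrams.2 (hl ▸ isChain_iff_forall_mem_bigrams.1 h)

end Bigrams

section Phi
variable {α : Type*}

lemma none_none_notMem_Phi {w : List α} (hw : w ≠ []) : (none, none) ∉ Phi w := by
  have : (delim w).IsChain (fun x y => x.isSome ∨ y.isSome) := by
    obtain ⟨c, w, rfl⟩ := List.exists_cons_of_ne_nil hw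
    rw [delim, List.map_cons, List.cons_append, List.isChain_cons_cons, ← List.cons_append,
      ← List.map_cons, List.isChain_append, List.getLast?_map]
    exact ⟨by simp, List.isChain_map_of_isChain _ (fun _ _ _ => by simp)
      (List.pairwise_of_forall fun _ _ => trivial).isChain, .singleton _, by simp⟩
  intro h
  simpa using isChain_iff_forall_mem_bigrams.1 this _ h

lemma map_filter_delim (q : α → Bool) (w : List α) :
    (delim w).map (Option.filter q) =
      none :: (w.map (fun c => if q c then some c else none) ++ [none]) := by
  simp [delim, Option.filter]

lemma map_Phi_append_of_forall_left (q : α → Bool) {s t : List α}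
    (hs : ∀ c ∈ s, q c) (ht : ∀ c ∈ t, q c = false) :
    (Phi (s ++ t)).map (Prod.map (Option.filter q) (Option.filter q)) =
      Phi s + Multiset.replicate t.length (none, none) := by
  have hmap : (s ++ t).map (fun c => if q c then some c else none) =
      s.map some ++ List.replicate t.length none := by
    simp_all [List.map_congr_left]
  rw [Phi, ← bigrams_map, map_filter_delim, hmap, List.append_assoc, ← List.replicate_succ',
    List.replicate_succ, ← List.cons_append, bigrams_append_cons, bigrams_cons_replicate]
  rfl

lemma map_Phi_append_of_forall_right (q : α → Bool) {s t : List α}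
    (hs : ∀ c ∈ s, q c = false) (ht : ∀ c ∈ t, q c) :
    (Phi (s ++ t)).map (Prod.map (Option.filter q) (Option.filter q)) =
      Multiset.replicate s.length (none, none) + Phi t := by
  have hmap : (s ++ t).map (fun c => if q c then some c else none) =
      List.replicate s.length none ++ t.map some := by
    simp_all [List.map_congr_left]
  rw [Phi, ← bigrams_map, map_filter_delim, hmap, List.append_assoc, ← List.cons_append,
    ← List.replicate_succ, List.replicate_succ', List.append_assoc, List.singleton_append,
    bigrams_append_cons, ← List.replicate_succ', List.replicate_succ, bigrams_cons_replicate]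
  rfl

lemma Phi_eq_of_add_replicate_eq {a u : List α} (ha : a ≠ []) (hu : u ≠ []) {m n : ℕ}
    (h : Phi a + Multiset.replicate m (none, none) = Phi u + Multiset.replicate n (none, none)) :
    Phi a = Phi u := by
  classical
  have hmn : m = n := by
    simpa [Multiset.count_eq_zero.2 (none_none_notMem_Phi ha),
      Multiset.count_eq_zero.2 (none_none_notMem_Phi hu)] using
      congrArg (Multiset.count (none, none)) h
  subst hmn
  exact add_right_cancel h

lemma Phi_eq_and_Phi_eq_of_Phi_append_eq (p : α → Prop) {a b u v : List α}
    (ha0 : a ≠ []) (hb0 : b ≠ []) (hu0 : u ≠ []) (hv0 : v ≠ [])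
    (ha : ∀ c ∈ a, ¬ p c) (hb : ∀ c ∈ b, p c) (hu : ∀ c ∈ u, ¬ p c) (hv : ∀ c ∈ v, p c)
    (h : Phi (a ++ b) = Phi (u ++ v)) : Phi a = Phi u ∧ Phi b = Phi v := by
  classical
  constructor
  · have hmap := congrArg (Multiset.map (Prod.map (Option.filter fun c => ¬ p c)
      (Option.filter fun c => ¬ p c))) h
    rw [map_Phi_append_of_forall_left _ (by simpa using ha) (by simpa using hb),
      map_Phi_append_of_forall_left _ (by simpa using hu) (by simpa using hv)] at hmap
    exact Phi_eq_of_add_replicate_eq ha0 hu0 hmap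
  · have hmap := congrArg (Multiset.map (Prod.map (Option.filter fun c => p c)
      (Option.filter fun c => p c))) h
    rw [map_Phi_append_of_forall_right _ (by simpa using ha) (by simpa using hb),
      map_Phi_append_of_forall_right _ (by simpa using hu) (by simpa using hv),
      add_comm, add_comm _ (Phi v)] at hmap
    exact Phi_eq_of_add_replicate_eq hb0 hv0 hmap

end Phi

section SplitAdj
variable {α : Type*} {p : α → Prop}

def SplitAdj (p : α → Prop) : Option α → Option α → Prop
  | none, none => False
  | none, some c => ¬ p c
  | some c, none => p c
  | some c, some d => p c → p d

lemma isChain_splitAdj_delim_append {a b : List α} (ha0 : a ≠ []) (hb0 : b ≠ [])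
    (ha : ∀ c ∈ a, ¬ p c) (hb : ∀ c ∈ b, p c) : (delim (a ++ b)).IsChain (SplitAdj p) := by
  have hmono : ((a ++ b).map some).IsChain (SplitAdj p) :=
    (List.isChain_map some).2 <| List.Pairwise.isChain <| List.pairwise_append.2
      ⟨List.pairwise_of_forall_mem_list fun x hx _ _ h => absurd h (ha x hx),
        List.pairwise_of_forall_mem_list fun _ _ y hy _ => hb y hy, fun _ _ y hy _ => hb y hy⟩
  refine List.isChain_cons.2 ⟨?_, hmono.append (.singleton _) ?_⟩
  · obtain ⟨c, a, rfl⟩ := List.exists_cons_of_ne_nil ha0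
    simpa [SplitAdj] using ha c (by simp)
  · obtain ⟨b, d, rfl⟩ := (List.eq_nil_or_concat' b).resolve_left hb0
    simpa [SplitAdj] using hb d (by simp)

lemma exists_append_of_isChain_splitAdj {w : List α}
    (h : (w.map some ++ [none]).IsChain (SplitAdj p)) :
    ∃ a b, w = a ++ b ∧ (w ≠ [] → b ≠ []) ∧ (∀ c ∈ a, ¬ p c) ∧ ∀ c ∈ b, p c := by
  induction w with
  | nil => exact ⟨[], [], rfl, by simp, by simp, by simp⟩
  | cons c w ih =>
    obtain ⟨a, b, rfl, hb0, ha, hb⟩ := ih h.tail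
    by_cases hc : p c
    · have hmono : (c :: (a ++ b)).IsChain (fun x y => p x → p y) :=
        (List.isChain_map some).1 h.left_of_append
      exact ⟨[], c :: (a ++ b), rfl, fun _ => List.cons_ne_nil _ _, by simp,
        hmono.induction p _ (fun _ _ hxy hx => hxy hx) fun _ => hc⟩
    · refine ⟨c :: a, b, rfl, fun _ => ?_, List.forall_mem_cons.2 ⟨hc, ha⟩, hb⟩
      rintro rfl
      obtain rfl : a = [] := by simpa using hb0
      exact hc (List.isChain_pair.1 h)

lemma exists_append_of_isChain_splitAdj_delim {w : List α}
    (h : (delim w).IsChain (SplitAdj p)) :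
    ∃ a b, w = a ++ b ∧ a ≠ [] ∧ b ≠ [] ∧ (∀ c ∈ a, ¬ p c) ∧ ∀ c ∈ b, p c := by
  obtain ⟨a, b, rfl, hb0, ha, hb⟩ := exists_append_of_isChain_splitAdj h.tail
  have hab : a ++ b ≠ [] := by
    intro hab
    rw [hab] at h
    exact List.isChain_pair.1 h
  refine ⟨a, b, rfl, ?_, hb0 hab, ha, hb⟩
  rintro rfl
  obtain ⟨d, b, rfl⟩ := List.exists_cons_of_ne_nil (hb0 hab)
  exact (List.isChain_cons_cons.1 h).1 (hb d List.mem_cons_self)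

end SplitAdj

theorem UD_append_of_disjoint_general {α : Type*} (u v : List α)
    (hu : UD u) (hv : UD v) (hdisj : ∀ c : α, c ∈ u → c ∉ v) :
    UD (u ++ v) := by
  rcases eq_or_ne u [] with rfl | hu0
  · simpa using hv
  rcases eq_or_ne v [] with rfl | hv0
  · simpa using hu
  intro w hw
  have hchain : (delim (u ++ v)).IsChain (SplitAdj (· ∈ v)) :=
    isChain_splitAdj_delim_append hu0 hv0 hdisj fun _ => id
  obtain ⟨a, b, rfl, ha0, hb0, ha, hb⟩ :=
    exists_append_of_isChain_splitAdj_delim (isChain_of_bigrams_eq hw hchain)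
  obtain ⟨hPa, hPb⟩ := Phi_eq_and_Phi_eq_of_Phi_append_eq (· ∈ v) ha0 hb0 hu0 hv0 ha hb hdisj
    (fun _ => id) hw
  rw [hu a hPa, hv b hPb]

theorem UD_append_of_disjoint {α : Type*} [Fintype α] (u v : List α)
    (hu : UD u) (hv : UD v) (hdisj : ∀ c : α, c ∈ u → c ∉ v) :
    UD (u ++ v) :=
  UD_append_of_disjoint_general u v hu hv hdisj
end

section
/- Every string w ∈ Σ* that is not uniquely decodable from its bigrams belongs to some obstruction language K_{x,a,b}; i.e., Σ* \ L_UNIQ ⊆ L_OBST. -/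
/-- The obstruction language `I_{x,a,b} = Σ* a x (Σ\{a})* b Σ*`. -/
def Ilang {α : Type*} (x a b : α) : Language α :=
  {w | ∃ p m s : List α, w = p ++ a :: x :: (m ++ b :: s) ∧ a ∉ m}

/-- The obstruction language `J_{x,a,b} = Σ* a (Σ\{x})* b Σ*`. -/
def Jlang {α : Type*} (x a b : α) : Language α :=
  {w | ∃ p m s : List α, w = p ++ a :: (m ++ b :: s) ∧ x ∉ m}

/-- The obstruction language `K_{x,a,b} = I_{x,a,b} ∩ J_{x,a,b}`. -/
def Klang {α : Type*} (x a b : α) : Language α :=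
  {w | w ∈ Ilang x a b ∧ w ∈ Jlang x a b}

/-!
Take `w' ≠ w` with the same encoding. The delimiters force `w` and `w'` to start with the same
letter and to have the same bigram multiset, so after stripping their longest common prefix they
read `a x …` and `a y …` with `x ≠ y`, and an obstruction in this suffix is one in `w`.

Suppose the suffix `U = a x …` avoids `L_OBST`. Then every occurrence of `a` in `U` except the last
is followed by `x` (otherwise an `a`-loop avoiding `x`, or a factor `a c … x`, is an obstruction),
so the bigram `(a, y)` sits at the last `a`, and the tail `F` after it contains neither `a` nor `x`.
A letter of `F` occurring before the last `a` would put `U` in `K_{x,a,c}`, so `F` is closed under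
the successor relation of the bigrams of `U`. Walking `V = a y …` along the same bigrams keeps
`y …` inside `F`, yet `V` must re-enter `a` through the bigram ending at the last `a` of `U`.
-/

section

variable {α : Type*}

def Lobst (α : Type*) : Language α :=
  {w | ∃ x a b : α, a ≠ x ∧ b ≠ x ∧ w ∈ Klang x a b}

theorem cons_mem_Lobst {w : List α} (c : α) (hw : w ∈ Lobst α) : c :: w ∈ Lobst α := by
  obtain ⟨x, a, b, hax, hbx, ⟨p, m, s, rfl, hm⟩, ⟨p', m', s', hw', hm'⟩⟩ := hw
  exact ⟨x, a, b, hax, hbx, ⟨c :: p, m, s, rfl, hm⟩, ⟨c :: p', m', s', by rw [hw']; rfl, hm'⟩⟩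

section Bigrams

@[simp]
theorem bigrams_nil : bigrams ([] : List α) = 0 := rfl

@[simp]
theorem bigrams_singleton (a : α) : bigrams [a] = 0 := rfl

@[simp]
theorem bigrams_cons_cons_s16 (a b : α) (l : List α) :
    bigrams (a :: b :: l) = (a, b) ::ₘ bigrams (b :: l) := rfl

theorem mem_bigrams_iff {c d : α} {l : List α} :
    (c, d) ∈ bigrams l ↔ ∃ p s, l = p ++ c :: d :: s := by
  induction l with
  | nil => simp
  | cons a l ih =>
    cases l with
    | nil => simp [List.cons_eq_append_iff]
    | cons b l =>
      simp only [bigrams_cons_cons_s16, Multiset.mem_cons, Prod.mk.injEq, ih]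
      constructor
      · rintro (⟨rfl, rfl⟩ | ⟨p, s, h⟩)
        · exact ⟨[], l, rfl⟩
        · exact ⟨a :: p, s, by rw [h]; rfl⟩
      · rintro ⟨_ | ⟨e, p⟩, s, h⟩
        · simp_all
        · simp only [List.cons_append, List.cons.injEq] at h
          exact Or.inr ⟨p, s, h.2⟩

theorem mem_tail_of_mem_bigrams {e a : α} {l : List α} (h : (e, a) ∈ bigrams l) : a ∈ l.tail := by
  obtain ⟨_ | ⟨_, p⟩, s, rfl⟩ := mem_bigrams_iff.mp h <;> simp

theorem forall_mem_of_bigrams_closed (P : α → Prop) {a : α} {l : List α}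
    (hclosed : ∀ c d, (c, d) ∈ bigrams (a :: l) → P c → P d) (ha : P a) : ∀ e ∈ a :: l, P e :=
  List.IsChain.induction P _
    (List.isChain_iff_forall_rel_of_append_cons_cons.mpr fun _ _ p s h =>
      mem_bigrams_iff.mpr ⟨p, s, h⟩)
    (fun c d h => hclosed c d h) (fun _ => ha)

end Bigrams

theorem List.eq_append_cons_of_mem_last {a : α} {l : List α} (h : a ∈ l) :
    ∃ p s, l = p ++ a :: s ∧ a ∉ s := by
  obtain ⟨s, p, hl, hs⟩ := List.eq_append_cons_of_mem (List.mem_reverse.mpr h)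
  exact ⟨p.reverse, s.reverse, by simpa using congrArg List.reverse hl, by simpa using hs⟩

section Obstruction

variable {a x : α} {U₂ : List α}

/-- Witnesses: for `x = a`, `K_{c,a,a}` (the loop `a c … a` against the initial `a a`); otherwise
the first return to `a` after `a c` either passes through `x`, giving `K_{c,a,x}` against the
initial `a x`, or it does not, giving `K_{x,a,a}`. -/
theorem mem_Lobst_of_succ_ne {c : α} {p s : List α} (hU : a :: x :: U₂ = p ++ a :: c :: s)
    (hcx : c ≠ x) (ha : a ∈ c :: s) : a :: x :: U₂ ∈ Lobst α := by
  obtain ⟨m, r, hcs, ham⟩ := List.eq_append_cons_of_mem ha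
  by_cases hxa : x = a
  · subst hxa
    obtain ⟨m', rfl⟩ : ∃ m', m = c :: m' := by
      cases m with
      | nil => exact absurd (List.cons.inj hcs).1 hcx
      | cons e m' => exact ⟨m', by rw [(List.cons.inj hcs).1]⟩
    have hcs' : s = m' ++ x :: r := (List.cons.inj hcs).2
    refine ⟨c, x, x, fun h => ham (h ▸ List.mem_cons_self), fun h => ham (h ▸ List.mem_cons_self),
      ⟨p, m', r, by rw [hU, hcs'], fun h => ham (List.mem_cons_of_mem _ h)⟩,
      ⟨[], [], U₂, rfl, by simp⟩⟩
  · have haU₂ : a ∈ U₂ := by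
      obtain _ | ⟨_, _ | ⟨_, p⟩⟩ := p
      · exact absurd (List.cons.inj (List.cons.inj hU).2).1 (Ne.symm hcx)
      · exact absurd (List.cons.inj (List.cons.inj hU).2).1 hxa
      · simp only [List.cons_append, List.cons.injEq] at hU
        simp [hU.2.2]
    obtain ⟨m₀, r₀, hU₂, ham₀⟩ := List.eq_append_cons_of_mem haU₂
    by_cases hxm : x ∈ m
    · obtain ⟨μ, ν, rfl⟩ := List.append_of_mem hxm
      obtain ⟨μ', rfl⟩ : ∃ μ', μ = c :: μ' := by
        cases μ with
        | nil => exact absurd (List.cons.inj hcs).1 hcx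
        | cons e μ' => exact ⟨μ', by rw [(List.cons.inj hcs).1]⟩
      refine ⟨c, a, x, fun h => ham (by simp [h]), Ne.symm hcx,
        ⟨p, μ', ν ++ a :: r, by simp [hU, (List.cons.inj hcs).2], fun h => ham (by simp [h])⟩,
        ⟨[], [], U₂, rfl, by simp⟩⟩
    · exact ⟨x, a, a, Ne.symm hxa, Ne.symm hxa, ⟨[], m₀, r₀, by rw [hU₂]; rfl, ham₀⟩,
        ⟨p, m, r, by rw [hU, hcs], hxm⟩⟩

theorem mem_Ilang_of_not_mem_Lobst {c : α} {q s : List α} (hU : a :: x :: U₂ ∉ Lobst α)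
    (hsplit : a :: x :: U₂ = q ++ c :: s) (hca : c ≠ a) (hcx : c ≠ x) (has : a ∈ s) :
    a ≠ x ∧ a :: x :: U₂ ∈ Ilang x a c := by
  have haq : a ∈ q := by
    cases q with
    | nil => exact absurd (List.cons.inj hsplit).1.symm hca
    | cons e q => simp [(List.cons.inj hsplit).1]
  obtain ⟨q₁, μ, rfl, haμ⟩ := List.eq_append_cons_of_mem_last haq
  have hsplit' : a :: x :: U₂ = q₁ ++ a :: (μ ++ c :: s) := by simp [hsplit]
  cases μ with
  | nil => exact absurd (mem_Lobst_of_succ_ne hsplit' hcx (List.mem_cons_of_mem _ has)) hU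
  | cons e μ =>
    obtain rfl : e = x := by
      by_contra hex
      exact hU (mem_Lobst_of_succ_ne hsplit' hex (by simp [has]))
    exact ⟨fun h => haμ (h ▸ List.mem_cons_self),
      ⟨q₁, μ, s, hsplit', fun h => haμ (List.mem_cons_of_mem _ h)⟩⟩

theorem bigrams_closed_of_not_mem_Lobst {q F : List α} (hU : a :: x :: U₂ ∉ Lobst α)
    (hsplit : a :: x :: U₂ = q ++ a :: F) (haF : a ∉ F) (hxF : x ∉ F) :
    ∀ c d, (c, d) ∈ bigrams (a :: x :: U₂) → c ∈ F → d ∈ F := by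
  intro c d hcd hcF
  have hca : c ≠ a := fun h => haF (h ▸ hcF)
  have hcx : c ≠ x := fun h => hxF (h ▸ hcF)
  obtain ⟨q', r', hq'⟩ := mem_bigrams_iff.mp hcd
  rcases List.append_eq_append_iff.mp (hsplit.symm.trans hq') with
    ⟨_ | ⟨_, a'⟩, -, h⟩ | ⟨_ | ⟨_, c'⟩, hq, h⟩
  · exact absurd (List.cons.inj h).1.symm hca
  · simp [(List.cons.inj h).2]
  · exact absurd (List.cons.inj h).1 hca
  · obtain ⟨hax, hI⟩ := mem_Ilang_of_not_mem_Lobst hU hq' hca hcx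
      (by simp [(List.cons.inj h).2])
    obtain ⟨ν, ρ, hF⟩ := List.append_of_mem hcF
    exact (hU ⟨x, a, c, hax, hcx, hI,
      ⟨q, ν, ρ, by rw [hsplit, hF], fun h => hxF (by simp [hF, h])⟩⟩).elim

end Obstruction

theorem mem_Lobst_of_bigrams_eq_of_ne {a x y : α} {U₂ V₂ : List α}
    (hbig : bigrams (a :: x :: U₂) = bigrams (a :: y :: V₂)) (hxy : x ≠ y) :
    a :: x :: U₂ ∈ Lobst α := by
  by_contra hU
  obtain ⟨q, r, hsplit⟩ : ∃ q r, a :: x :: U₂ = q ++ a :: y :: r :=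
    mem_bigrams_iff.mp (by simp [hbig])
  have haF : a ∉ y :: r := fun ha => hU (mem_Lobst_of_succ_ne hsplit (Ne.symm hxy) ha)
  have hxF : x ∉ y :: r := by
    intro hx
    obtain ⟨μ, ν, rfl⟩ := List.append_of_mem ((List.mem_cons.mp hx).resolve_left hxy)
    exact hU ⟨y, a, x, fun h => haF (by simp [h]), hxy,
      ⟨q, μ, ν, hsplit, fun h => haF (by simp [h])⟩, ⟨[], [], U₂, rfl, by simp⟩⟩
  have hclosed := bigrams_closed_of_not_mem_Lobst hU hsplit haF hxF
  have hV : ∀ e ∈ y :: V₂, e ∈ y :: r :=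
    forall_mem_of_bigrams_closed (· ∈ y :: r)
      (fun c d h => hclosed c d (by simp [hbig, h])) List.mem_cons_self
  obtain ⟨q₀, e, rfl⟩ : ∃ q₀ e, q = q₀ ++ [e] := by
    rcases List.eq_nil_or_concat' q with rfl | hq
    · exact absurd (List.cons.inj (List.cons.inj hsplit).2).1 hxy
    · exact hq
  have hea : (e, a) ∈ bigrams (a :: y :: V₂) := by
    rw [← hbig, hsplit]
    exact mem_bigrams_iff.mpr ⟨q₀, y :: r, by simp⟩
  exact haF (hV a (mem_tail_of_mem_bigrams hea))

theorem mem_Lobst_of_bigrams_eq {U V : List α} (hhead : U.head? = V.head?)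
    (hbig : bigrams U = bigrams V) (hne : U ≠ V) : U ∈ Lobst α := by
  induction U generalizing V with
  | nil => exact absurd (List.head?_eq_none_iff.mp hhead.symm).symm hne
  | cons a U ih =>
    obtain ⟨V, rfl⟩ := List.head?_eq_some_iff.mp hhead.symm
    cases U with
    | nil =>
      cases V with
      | nil => exact absurd rfl hne
      | cons y V => simp at hbig
    | cons x U =>
      cases V with
      | nil => simp at hbig
      | cons y V =>
        by_cases hxy : x = y
        · subst hxy
          exact cons_mem_Lobst a
            (ih (V := x :: V) rfl ((Multiset.cons_inj_right _).mp hbig) fun h => hne (by rw [h]))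
        · exact mem_Lobst_of_bigrams_eq_of_ne hbig hxy

section Phi

theorem Phi_eq (w : List α) : Phi w = (none, w.head?) ::ₘ bigrams (w.map some ++ [none]) := by
  cases w <;> rfl

theorem filterMap_bigrams_map_some_append_none (w : List α) :
    (bigrams (w.map some ++ [none])).filterMap (fun p => Option.map₂ Prod.mk p.1 p.2) =
      bigrams w := by
  induction w with
  | nil => rfl
  | cons c w ih =>
    cases w with
    | nil => rfl
    | cons d w =>
      rw [bigrams_cons_cons_s16, ← ih]
      rfl

theorem filterMap_Phi (w : List α) :
    (Phi w).filterMap (fun p => Option.map₂ Prod.mk p.1 p.2) = bigrams w := by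
  rw [Phi_eq, Multiset.filterMap_cons_none _ _ rfl, filterMap_bigrams_map_some_append_none]

theorem bigrams_eq_of_Phi_eq {w w' : List α} (h : Phi w = Phi w') : bigrams w = bigrams w' := by
  rw [← filterMap_Phi w, h, filterMap_Phi]

theorem none_fst_not_mem_bigrams (w : List α) (z : Option α) :
    (none, z) ∉ bigrams (w.map some ++ [none]) := by
  intro h
  obtain ⟨p, s, hps⟩ := mem_bigrams_iff.mp h
  have : none ∈ (w.map some ++ [none]).dropLast := by simp [hps]
  simp at this

theorem head?_eq_of_Phi_eq {w w' : List α} (h : Phi w = Phi w') : w.head? = w'.head? := by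
  have hmem : (none, w.head?) ∈ Phi w' := h ▸ by simp [Phi_eq]
  rw [Phi_eq, Multiset.mem_cons] at hmem
  rcases hmem with hmem | hmem
  · exact (Prod.mk.inj hmem).2
  · exact absurd hmem (none_fst_not_mem_bigrams w' _)

end Phi

end

theorem not_UD_mem_obstruction_general {α : Type*} (w : List α) (h : ¬ UD w) :
    ∃ x a b : α, a ≠ x ∧ b ≠ x ∧ w ∈ Klang x a b := by
  obtain ⟨w', hPhi, hne⟩ : ∃ w', Phi w' = Phi w ∧ w' ≠ w := by simpa [UD] using h
  exact mem_Lobst_of_bigrams_eq (head?_eq_of_Phi_eq hPhi.symm) (bigrams_eq_of_Phi_eq hPhi.symm)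
    hne.symm

theorem not_UD_mem_obstruction {α : Type*} [Fintype α] (w : List α) (h : ¬ UD w) :
    ∃ x a b : α, a ≠ x ∧ b ≠ x ∧ w ∈ Klang x a b :=
  not_UD_mem_obstruction_general w h
end
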